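/- Let f be a convex function on an interval I, let Φ : M_m(ℂ) → M_n(ℂ) be a positive unital linear map, and let A be an m×m Hermitian matrix with spectrum in I. Then the eigenvalues of f(Φ(A)) are weakly majorized by the eigenvalues of Φ(f(A)): for each 1 ≤ k ≤ n, the sum of the k largest eigenvalues of f(Φ(A)) is at most the sum of the k largest eigenvalues of Φ(f(A)). -/

import Mathlib

open Matrix
open scoped ComplexOrder Kronecker

/-- Functional calculus for Hermitian matrices: apply `f : ℝ → ℝ` to the eigenvalues in a
spectral decomposition (junk value `0` if the matrix is not Hermitian). -/
noncomputable def hermCFC {ι : Type*} [Fintype ι] [DecidableEq ι]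
    (M : Matrix ι ι ℂ) (f : ℝ → ℝ) : Matrix ι ι ℂ :=
  if h : M.IsHermitian then h.cfc f else 0

/-- Eigenvalues of a Hermitian matrix listed in decreasing order:
`eigDesc M j` is the `(j+1)`-th largest eigenvalue (junk value `0` if not Hermitian). -/
noncomputable def eigDesc {n : ℕ} (M : Matrix (Fin n) (Fin n) ℂ) : Fin n → ℝ :=
  if h : M.IsHermitian then fun j => h.eigenvalues (Tuple.sort h.eigenvalues j.rev) else 0

/-- Eigenvalues of a Hermitian matrix listed in increasing order:
`eigAsc M j` is the `(j+1)`-th smallest eigenvalue (junk value `0` if not Hermitian). -/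
noncomputable def eigAsc {n : ℕ} (M : Matrix (Fin n) (Fin n) ℂ) : Fin n → ℝ :=
  if h : M.IsHermitian then fun j => h.eigenvalues (Tuple.sort h.eigenvalues j) else 0

/-- The absolute value `|X| = (XᴴX)^(1/2)` of a matrix. -/
noncomputable def matAbs {n : ℕ} (X : Matrix (Fin n) (Fin n) ℂ) : Matrix (Fin n) (Fin n) ℂ :=
  (Matrix.posSemidef_conjTranspose_mul_self X).isHermitian.eigenvectorUnitary.1 *
    diagonal (((↑) : ℝ → ℂ) ∘ (√·) ∘ (Matrix.posSemidef_conjTranspose_mul_self X).isHermitian.eigenvalues) *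
    (star (Matrix.posSemidef_conjTranspose_mul_self X).isHermitian.eigenvectorUnitary : Matrix (Fin n) (Fin n) ℂ)

/-- The Loewner order: `X ≤ Y` iff `Y - X` is positive semidefinite. -/
def loewnerLE {n : ℕ} (X Y : Matrix (Fin n) (Fin n) ℂ) : Prop := (Y - X).PosSemidef

/-!
Let `P q` be the rank-one spectral projections of `A`. For a unit vector `v` the weights
`⟪v, Φ (P q) v⟫` are nonnegative and sum to `⟪v, Φ 1 v⟫ = 1`, and `⟪v, Φ (g A) v⟫` is the
average of `g` over the eigenvalues of `A` with these weights; so Jensen gives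
`f ⟪v, Φ A v⟫ ≤ ⟪v, Φ (f A) v⟫`. Taking for `v` the eigenvectors `v i` of `Φ A` turns this into `f (β i) ≤ ⟪v i, Φ (f A) v i⟫`,
where `β` are the eigenvalues of `Φ A` and `f ∘ β` those of `f (Φ A)`.

Summing over the indices of the `k + 1` largest `f (β i)` finishes the proof via Ky Fan's maximum
principle: the quadratic form of a Hermitian matrix summed over `k + 1` orthonormal vectors is
`∑ q, c q * d q` with `d` its eigenvalues, `0 ≤ c q ≤ 1` (Bessel) and `∑ q, c q = k + 1`
(Parseval), hence at most the sum of the `k + 1` largest eigenvalues.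
-/

open Finset
open scoped InnerProductSpace

theorem sum_mul_le_sum_of_threshold {ι : Type*} [Fintype ι] {S : Finset ι} {d c : ι → ℝ} {t : ℝ}
    (hS : ∀ i ∈ S, t ≤ d i) (hSc : ∀ i ∉ S, d i ≤ t)
    (hc₀ : ∀ i, 0 ≤ c i) (hc₁ : ∀ i, c i ≤ 1) (hc : ∑ i, c i = #S) :
    ∑ i, c i * d i ≤ ∑ i ∈ S, d i := by
  classical
  have hnonpos : ∑ i, (c i - if i ∈ S then 1 else 0) * (d i - t) ≤ 0 :=
    sum_nonpos fun i _ => by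
      split_ifs with hi
      · nlinarith [hS i hi, hc₁ i]
      · nlinarith [hSc i hi, hc₀ i]
  have hexpand : ∑ i, (c i - if i ∈ S then 1 else 0) * (d i - t) =
      ∑ i, c i * d i - ∑ i ∈ S, d i - t * (∑ i, c i - #S) := by
    simp only [sub_mul, mul_sub, sum_sub_distrib, ite_mul, one_mul, zero_mul, sum_ite_mem,
      univ_inter, ← sum_mul, sum_const, nsmul_eq_mul]
    ring
  rw [hc, sub_self, mul_zero, sub_zero] at hexpand
  linarith

noncomputable def sumLargest {n : ℕ} (d : Fin n → ℝ) (k : Fin n) : ℝ :=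
  ∑ j ∈ Iic k, d (Tuple.sort d j.rev)

theorem exists_threshold_sumLargest {n : ℕ} (d : Fin n → ℝ) (k : Fin n) :
    ∃ (S : Finset (Fin n)) (t : ℝ), #S = k + 1 ∧ (∀ i ∈ S, t ≤ d i) ∧ (∀ i ∉ S, d i ≤ t) ∧
      ∑ i ∈ S, d i = sumLargest d k := by
  set σ := Fin.revPerm.trans (Tuple.sort d)
  have hmono := Tuple.monotone_sort d
  refine ⟨(Iic k).map σ.toEmbedding, d (Tuple.sort d k.rev), by simp, ?_, ?_,
    by simp [sumLargest, σ]⟩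
  · simp only [mem_map, mem_Iic, Equiv.coe_toEmbedding, forall_exists_index, and_imp]
    rintro _ j hj rfl
    exact hmono (Fin.rev_le_rev.mpr hj)
  · intro i hi
    obtain ⟨p, rfl⟩ := (Tuple.sort d).surjective i
    simp only [mem_map, mem_Iic, Equiv.coe_toEmbedding, not_exists, not_and] at hi
    have : p ≤ k.rev := by
      by_contra! h
      exact hi p.rev (by simpa using (Fin.rev_lt_rev.mpr h).le) (by simp [σ])
    exact hmono this

namespace Matrix.IsHermitian

variable {ι : Type*} [Fintype ι] [DecidableEq ι] {A : Matrix ι ι ℂ} (hA : A.IsHermitian)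

noncomputable def eigenProj (q : ι) : Matrix ι ι ℂ :=
  vecMulVec ⇑(hA.eigenvectorBasis q) (star ⇑(hA.eigenvectorBasis q))

lemma cfc_eq_sum_smul_eigenProj (g : ℝ → ℝ) :
    hA.cfc g = ∑ q, (g (hA.eigenvalues q) : ℂ) • hA.eigenProj q := by
  ext i j
  simp [IsHermitian.cfc, mul_apply, diagonal_apply, eigenProj, Matrix.sum_apply, vecMulVec_apply,
    mul_comm, mul_assoc]

lemma cfc_id_eq : hA.cfc id = A := by
  rw [← cfc_eq, cfc_id ℝ A hA.isSelfAdjoint]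

lemma sum_eigenProj : ∑ q, hA.eigenProj q = 1 := by
  simpa [← cfc_eq, cfc_one ℝ A hA.isSelfAdjoint] using (hA.cfc_eq_sum_smul_eigenProj 1).symm

lemma re_dotProduct_eigenProj_mulVec (q : ι) (v : EuclideanSpace ℂ ι) :
    (star ⇑v ⬝ᵥ hA.eigenProj q *ᵥ ⇑v).re = ‖⟪hA.eigenvectorBasis q, v⟫_ℂ‖ ^ 2 := by
  rw [← Complex.normSq_eq_norm_sq, ← Complex.ofReal_re (Complex.normSq _), ← Complex.mul_conj,
    EuclideanSpace.inner_eq_star_dotProduct]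
  simp [eigenProj, vecMulVec_mulVec, dotProduct_comm, star_dotProduct]

lemma re_dotProduct_cfc_mulVec (g : ℝ → ℝ) (v : EuclideanSpace ℂ ι) :
    (star ⇑v ⬝ᵥ hA.cfc g *ᵥ ⇑v).re =
      ∑ q, ‖⟪hA.eigenvectorBasis q, v⟫_ℂ‖ ^ 2 * g (hA.eigenvalues q) := by
  simp [hA.cfc_eq_sum_smul_eigenProj, Matrix.sum_mulVec, dotProduct_sum, smul_mulVec,
    ← hA.re_dotProduct_eigenProj_mulVec, mul_comm]

end Matrix.IsHermitian

section PositiveMap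

variable {ι κ : Type*} [Fintype ι] [DecidableEq ι]
  (Φ : Matrix ι ι ℂ →ₗ[ℂ] Matrix κ κ ℂ) {A : Matrix ι ι ℂ} (hA : A.IsHermitian)

lemma map_cfc_eq_sum_smul (g : ℝ → ℝ) :
    Φ (hA.cfc g) = ∑ q, (g (hA.eigenvalues q) : ℂ) • Φ (hA.eigenProj q) := by
  simp [hA.cfc_eq_sum_smul_eigenProj]

lemma isHermitian_map_cfc (hpos : ∀ X, X.PosSemidef → (Φ X).PosSemidef) (g : ℝ → ℝ) :
    (Φ (hA.cfc g)).IsHermitian := by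
  rw [map_cfc_eq_sum_smul]
  exact isSelfAdjoint_sum _ fun q _ =>
    ((hpos _ (posSemidef_vecMulVec_self_star _)).isHermitian.smul (Complex.conj_ofReal _))

variable [Fintype κ]

lemma re_dotProduct_map_cfc_mulVec (g : ℝ → ℝ) (v : κ → ℂ) :
    (star v ⬝ᵥ Φ (hA.cfc g) *ᵥ v).re =
      ∑ q, (star v ⬝ᵥ Φ (hA.eigenProj q) *ᵥ v).re * g (hA.eigenvalues q) := by
  simp [map_cfc_eq_sum_smul, Matrix.sum_mulVec, dotProduct_sum, smul_mulVec, mul_comm]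

theorem ConvexOn.map_re_dotProduct_mulVec_le [DecidableEq κ] {I : Set ℝ} {f : ℝ → ℝ}
    (hf : ConvexOn ℝ I f)
    (hpos : ∀ X, X.PosSemidef → (Φ X).PosSemidef) (hunital : Φ 1 = 1)
    (hspec : ∀ i, hA.eigenvalues i ∈ I) {v : EuclideanSpace ℂ κ} (hv : ‖v‖ = 1) :
    f (star ⇑v ⬝ᵥ Φ A *ᵥ ⇑v).re ≤ (star ⇑v ⬝ᵥ Φ (hA.cfc f) *ᵥ ⇑v).re := by
  set μ : ι → ℝ := fun q => (star ⇑v ⬝ᵥ Φ (hA.eigenProj q) *ᵥ ⇑v).re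
  have hμ₀ : ∀ q, 0 ≤ μ q := fun q =>
    (Complex.nonneg_iff.mp
      ((hpos _ (posSemidef_vecMulVec_self_star _)).dotProduct_mulVec_nonneg _)).1
  have hμ₁ : ∑ q, μ q = 1 := by
    simp only [μ, ← Complex.re_sum, ← dotProduct_sum, ← Matrix.sum_mulVec, ← map_sum,
      hA.sum_eigenProj, hunital, one_mulVec]
    simp [dotProduct_comm, ← EuclideanSpace.inner_eq_star_dotProduct, hv]
  have hmean := re_dotProduct_map_cfc_mulVec Φ hA id v
  rw [hA.cfc_id_eq] at hmean
  rw [hmean, re_dotProduct_map_cfc_mulVec]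
  exact hf.map_sum_le (fun q _ => hμ₀ q) hμ₁ (fun q _ => hspec q)

end PositiveMap

theorem Matrix.IsHermitian.sum_re_dotProduct_cfc_mulVec_le_sumLargest {n : ℕ}
    {B : Matrix (Fin n) (Fin n) ℂ} (hB : B.IsHermitian) (g : ℝ → ℝ) {ι : Type*}
    {w : ι → EuclideanSpace ℂ (Fin n)} (hw : Orthonormal ℂ w) {S : Finset ι} {k : Fin n}
    (hS : #S = k + 1) :
    ∑ i ∈ S, (star ⇑(w i) ⬝ᵥ hB.cfc g *ᵥ ⇑(w i)).re ≤ sumLargest (g ∘ hB.eigenvalues) k := by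
  obtain ⟨T, t, hT, hTt, hTct, hTsum⟩ := exists_threshold_sumLargest (g ∘ hB.eigenvalues) k
  set c : Fin n → ℝ := fun q => ∑ i ∈ S, ‖⟪hB.eigenvectorBasis q, w i⟫_ℂ‖ ^ 2
  have hc₀ : ∀ q, 0 ≤ c q := fun q => sum_nonneg fun _ _ => by positivity
  have hc₁ : ∀ q, c q ≤ 1 := fun q => by
    simpa [c, norm_inner_symm, hB.eigenvectorBasis.orthonormal.1 q] using
      hw.sum_inner_products_le (hB.eigenvectorBasis q) (s := S)
  have hc : ∑ q, c q = #T := by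
    rw [hT, ← hS, sum_comm]
    simp [OrthonormalBasis.sum_sq_norm_inner_right, hw.1]
  calc ∑ i ∈ S, (star ⇑(w i) ⬝ᵥ hB.cfc g *ᵥ ⇑(w i)).re
        = ∑ q, c q * g (hB.eigenvalues q) := by
          simp only [hB.re_dotProduct_cfc_mulVec, c, sum_mul]
          exact sum_comm
    _ ≤ ∑ q ∈ T, g (hB.eigenvalues q) := sum_mul_le_sum_of_threshold hTt hTct hc₀ hc₁ hc
    _ = sumLargest (g ∘ hB.eigenvalues) k := hTsum

lemma hermCFC_of_isHermitian {ι : Type*} [Fintype ι] [DecidableEq ι] {A : Matrix ι ι ℂ}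
    (hA : A.IsHermitian) (f : ℝ → ℝ) : hermCFC A f = hA.cfc f :=
  dif_pos hA

lemma sum_Iic_eigDesc {n : ℕ} {M : Matrix (Fin n) (Fin n) ℂ} (hM : M.IsHermitian) (k : Fin n) :
    ∑ j ∈ Iic k, eigDesc M j = sumLargest hM.eigenvalues k := by
  rw [eigDesc, dif_pos hM, sumLargest]

theorem stmt7_general {m n : ℕ} (I : Set ℝ) (f : ℝ → ℝ)
    (hconv : ConvexOn ℝ I f)
    (Φ : Matrix (Fin m) (Fin m) ℂ →ₗ[ℂ] Matrix (Fin n) (Fin n) ℂ)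
    (hpos : ∀ X : Matrix (Fin m) (Fin m) ℂ, X.PosSemidef → (Φ X).PosSemidef)
    (hunital : Φ 1 = 1)
    (A : Matrix (Fin m) (Fin m) ℂ) (hA : A.IsHermitian) (hspec : ∀ i, hA.eigenvalues i ∈ I) :
    ∀ k : Fin n, ∑ j ∈ Finset.Iic k, eigDesc (hermCFC (Φ A) f) j ≤
      ∑ j ∈ Finset.Iic k, eigDesc (Φ (hermCFC A f)) j := by
  intro k
  have hB : (Φ A).IsHermitian := hA.cfc_id_eq ▸ isHermitian_map_cfc Φ hA hpos id
  have hM : (hB.cfc f).IsHermitian := hB.cfc_eq f ▸ cfc_predicate f (Φ A)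
  have hH : (Φ (hA.cfc f)).IsHermitian := isHermitian_map_cfc Φ hA hpos f
  rw [hermCFC_of_isHermitian hA, hermCFC_of_isHermitian hB, sum_Iic_eigDesc hM,
    sum_Iic_eigDesc hH]
  obtain ⟨S, -, hS, -, -, hSsum⟩ := exists_threshold_sumLargest hM.eigenvalues k
  obtain ⟨T, -, hT, -, -, hTsum⟩ := exists_threshold_sumLargest (f ∘ hB.eigenvalues) k
  let u := hM.eigenvectorBasis
  let v := hB.eigenvectorBasis
  calc sumLargest hM.eigenvalues k
        = ∑ i ∈ S, (star ⇑(u i) ⬝ᵥ hB.cfc f *ᵥ ⇑(u i)).re := by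
          rw [← hSsum]
          simp_rw [hM.eigenvalues_eq]
          rfl
    _ ≤ sumLargest (f ∘ hB.eigenvalues) k :=
          hB.sum_re_dotProduct_cfc_mulVec_le_sumLargest f u.orthonormal hS
    _ = ∑ i ∈ T, f (hB.eigenvalues i) := hTsum.symm
    _ ≤ ∑ i ∈ T, (star ⇑(v i) ⬝ᵥ Φ (hA.cfc f) *ᵥ ⇑(v i)).re := sum_le_sum fun i _ => by
          rw [hB.eigenvalues_eq]
          exact hconv.map_re_dotProduct_mulVec_le Φ hA hpos hunital hspec (v.orthonormal.1 i)
    _ ≤ sumLargest hH.eigenvalues k := by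
          simpa [hH.cfc_id_eq] using
            hH.sum_re_dotProduct_cfc_mulVec_le_sumLargest id v.orthonormal hT

/-- For a convex `f` on an interval `I`, a positive unital linear map `Φ`, and a Hermitian `A`
with spectrum in `I`, the eigenvalues of `f(Φ(A))` are weakly majorized by those of `Φ(f(A))`:
the sum of the `k` largest eigenvalues of `f(Φ(A))` is at most that of `Φ(f(A))`. -/
theorem stmt7 {m n : ℕ} (I : Set ℝ) (hI : Convex ℝ I) (f : ℝ → ℝ)
    (hconv : ConvexOn ℝ I f)
    (Φ : Matrix (Fin m) (Fin m) ℂ →ₗ[ℂ] Matrix (Fin n) (Fin n) ℂ)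
    (hpos : ∀ X : Matrix (Fin m) (Fin m) ℂ, X.PosSemidef → (Φ X).PosSemidef)
    (hunital : Φ 1 = 1)
    (A : Matrix (Fin m) (Fin m) ℂ) (hA : A.IsHermitian) (hspec : ∀ i, hA.eigenvalues i ∈ I) :
    ∀ k : Fin n, ∑ j ∈ Finset.Iic k, eigDesc (hermCFC (Φ A) f) j ≤
      ∑ j ∈ Finset.Iic k, eigDesc (Φ (hermCFC A f)) j :=
  stmt7_general I f hconv Φ hpos hunital A hA hspec
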